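/- arXiv:1912.12078 — 4 statements merged into one kernel-verified Lean document; each statement's English description precedes it below -/
import Mathlib

section
/- Let D, R be real symmetric positive semidefinite q×q matrices with D·1 = R·1 = 0. If the second-smallest (by real part) eigenvalue of D + iR has nonpositive real part, then there exists a vector u not in the span of the all-ones vector with Du = 0 and Ru = σu for some real σ. -/
/-!
If `(D + iR) v = μ v` with `v ≠ 0` and `Re μ ≤ 0`, pairing with `v` gives
`v*Dv + i v*Rv = μ ‖v‖²` with `v*Dv, v*Rv ≥ 0`; hence `Re μ = 0`, `Dv = 0` and `Rv = (Im μ) v`.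
Consequently such a `v` is also killed by the adjoint of `N = D + iR - μ`, and as `ker Nᴴ` is
orthogonal to `range N`, there are no Jordan chains: the eigenspace of such a `μ` has dimension
equal to its algebraic multiplicity.
Two eigenvalues (with multiplicity) in the closed left half-plane therefore span a space of
eigenvectors of dimension at least two, which cannot lie in the line spanned by `1`.
-/

open Matrix Polynomial

/-- The complex matrix `D + iR` built from two real matrices. -/
noncomputable def cM {q : ℕ} (D R : Matrix (Fin q) (Fin q) ℝ) :
    Matrix (Fin q) (Fin q) ℂ :=
  D.map (fun a => (a : ℂ)) + Complex.I • (R.map (fun a => (a : ℂ)))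

/-- `Re λ₂(M) ≤ 0`: at least two eigenvalues (with multiplicity), ordered by real
part, have nonpositive real part. -/
noncomputable def reLam2Nonpos {q : ℕ} (M : Matrix (Fin q) (Fin q) ℂ) : Prop :=
  2 ≤ (M.charpoly.roots.filter (fun μ : ℂ => μ.re ≤ 0)).card

open Module
open scoped ComplexOrder

theorem Multiset.exists_mem_ne_or_two_le_count {α : Type*} [DecidableEq α] {s : Multiset α}
    (hs : 2 ≤ Multiset.card s) : (∃ a ∈ s, ∃ b ∈ s, a ≠ b) ∨ ∃ a, 2 ≤ s.count a := by
  refine or_iff_not_imp_left.mpr fun hne ↦ ?_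
  push Not at hne
  obtain ⟨a, ha⟩ := Multiset.card_pos_iff_exists_mem.mp (by omega : 0 < Multiset.card s)
  refine ⟨a, ?_⟩
  rw [Multiset.eq_replicate_card.mpr fun b hb ↦ hne b hb a ha, Multiset.count_replicate_self]
  simpa using hs

namespace Module.End

theorem maxGenEigenspace_eq_eigenspace_of_ker_sq {R M : Type*} [CommRing R] [AddCommGroup M]
    [Module R M] {f : End R M} {μ : R}
    (h : ∀ m, (f - μ • 1) ((f - μ • 1) m) = 0 → (f - μ • 1) m = 0) :
    f.maxGenEigenspace μ = f.eigenspace μ := by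
  refine le_antisymm (fun m hm ↦ ?_) eigenspace_le_maxGenEigenspace
  obtain ⟨k, hk⟩ := (mem_maxGenEigenspace f μ m).mp hm
  rw [eigenspace_def, LinearMap.mem_ker]
  clear hm
  induction k generalizing m with
  | zero => simp_all
  | succ k ih => exact h m (ih _ (by rwa [pow_succ, mul_apply] at hk))

variable {K V : Type*} [Field K] [AddCommGroup V] [Module K V] [FiniteDimensional K V]

theorem exists_eigenspace_not_le (f : End K V) {P : K → Prop} [DecidablePred P]
    (hP : 2 ≤ Multiset.card (f.charpoly.roots.filter P))
    (hss : ∀ μ, P μ → f.maxGenEigenspace μ = f.eigenspace μ)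
    {W : Submodule K V} (hW : finrank K W ≤ 1) : ∃ μ, P μ ∧ ¬ f.eigenspace μ ≤ W := by
  classical
  by_contra! hle
  rcases Multiset.exists_mem_ne_or_two_le_count hP with ⟨a, ha, b, hb, hab⟩ | ⟨a, ha⟩
  · rw [Multiset.mem_filter, mem_roots'] at ha hb
    have hEa := hasEigenvalue_iff.mp ((hasEigenvalue_iff_isRoot_charpoly f a).mpr ha.1.2)
    have hEb := hasEigenvalue_iff.mp ((hasEigenvalue_iff_isRoot_charpoly f b).mpr hb.1.2)
    have hdisj : Disjoint (f.eigenspace a) (f.eigenspace b) := f.disjoint_genEigenspace hab 1 1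
    have hsup := Submodule.finrank_sup_add_finrank_inf_eq (f.eigenspace a) (f.eigenspace b)
    rw [hdisj.eq_bot, finrank_bot, add_zero] at hsup
    have hsupW := Submodule.finrank_mono (sup_le (hle a ha.2) (hle b hb.2))
    have := Submodule.one_le_finrank_iff.mpr hEa
    have := Submodule.one_le_finrank_iff.mpr hEb
    omega
  · have hPa : P a := (Multiset.mem_filter.mp (Multiset.count_pos.mp (two_pos.trans_le ha))).2
    have hmult : 2 ≤ finrank K (f.eigenspace a) := by
      rw [← hss a hPa, LinearMap.finrank_maxGenEigenspace_eq, ← count_roots]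
      exact ha.trans (Multiset.count_le_of_le _ (Multiset.filter_le _ _))
    have haW := Submodule.finrank_mono (hle a hPa)
    omega

end Module.End

namespace Matrix

variable {n : Type*} [Fintype n]

theorem PosSemidef.map_ofReal {A : Matrix n n ℝ} (hA : A.PosSemidef) :
    (A.map (fun a => (a : ℂ))).PosSemidef := by
  classical
  obtain ⟨B, rfl⟩ : ∃ B : Matrix n n ℝ, A = star B * B := by
    open scoped MatrixOrder in
    exact CStarAlgebra.nonneg_iff_eq_star_mul_self.mp hA.nonneg
  change ((Bᴴ * B).map Complex.ofRealHom).PosSemidef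
  rw [Matrix.map_mul, conjTranspose_map (⇑Complex.ofRealHom) fun _ ↦ (Complex.conj_ofReal _).symm]
  exact posSemidef_conjTranspose_mul_self _

variable {A B : Matrix n n ℂ} {μ : ℂ}

theorem eigenvector_add_I_smul_of_re_nonpos (hA : A.PosSemidef) (hB : B.PosSemidef)
    (hμ : μ.re ≤ 0) {v : n → ℂ} (hv : v ≠ 0) (hev : (A + Complex.I • B) *ᵥ v = μ • v) :
    μ.re = 0 ∧ A *ᵥ v = 0 ∧ B *ᵥ v = (μ.im : ℂ) • v := by
  rw [add_mulVec, smul_mulVec] at hev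
  have hquad : star v ⬝ᵥ A *ᵥ v + Complex.I * (star v ⬝ᵥ B *ᵥ v) = μ * (star v ⬝ᵥ v) := by
    simpa [dotProduct_add, dotProduct_smul] using congrArg (star v ⬝ᵥ ·) hev
  obtain ⟨hd, hd'⟩ := Complex.nonneg_iff.mp (hA.dotProduct_mulVec_nonneg v)
  obtain ⟨-, hr'⟩ := Complex.nonneg_iff.mp (hB.dotProduct_mulVec_nonneg v)
  obtain ⟨hn, hn'⟩ := Complex.pos_iff.mp (dotProduct_star_self_pos_iff.mpr hv)
  have hre := congrArg Complex.re hquad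
  simp only [Complex.add_re, Complex.mul_re, Complex.I_re, Complex.I_im, ← hr', ← hn'] at hre
  have hμ0 : μ.re = 0 := by nlinarith
  have hAv : A *ᵥ v = 0 := by
    refine (hA.dotProduct_mulVec_zero_iff v).mp (Complex.ext ?_ hd'.symm)
    simp only [Complex.zero_re]
    nlinarith
  refine ⟨hμ0, hAv, ?_⟩
  rw [hAv, zero_add] at hev
  have hμI : μ = Complex.I * μ.im := Complex.ext (by simp [hμ0]) (by simp)
  rw [hμI, mul_smul] at hev
  exact smul_right_injective _ Complex.I_ne_zero hev

theorem mulVec_eq_zero_of_mulVec_mulVec_eq_zero [DecidableEq n] (hA : A.PosSemidef)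
    (hB : B.PosSemidef) (hμ : μ.re ≤ 0) {w : n → ℂ}
    (h : (A + Complex.I • B - μ • 1) *ᵥ ((A + Complex.I • B - μ • 1) *ᵥ w) = 0) :
    (A + Complex.I • B - μ • 1) *ᵥ w = 0 := by
  set N := A + Complex.I • B - μ • 1
  set v := N *ᵥ w
  by_contra hv
  have hev : (A + Complex.I • B) *ᵥ v = μ • v := by
    rwa [sub_mulVec, smul_mulVec, one_mulVec, sub_eq_zero] at h
  obtain ⟨hμ0, hAv, hBv⟩ := eigenvector_add_I_smul_of_re_nonpos hA hB hμ hv hev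
  -- `v` lies in the range of `N` and in the kernel of `Nᴴ`, which are orthogonal
  have hNv : Nᴴ *ᵥ v = 0 := by
    have hμ' : star μ = -Complex.I * μ.im := Complex.ext (by simp [hμ0]) (by simp)
    simp only [N, conjTranspose_sub, conjTranspose_add, conjTranspose_smul, conjTranspose_one,
      hA.isHermitian.eq, hB.isHermitian.eq, sub_mulVec, add_mulVec, smul_mulVec, one_mulVec,
      hAv, hBv, hμ', Complex.star_def, Complex.conj_I]
    match_scalars
    ring
  have : star v ⬝ᵥ v = 0 := calc
    star v ⬝ᵥ v = star v ᵥ* N ⬝ᵥ w := dotProduct_mulVec _ _ _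
    _ = star (Nᴴ *ᵥ v) ⬝ᵥ w := by rw [star_mulVec Nᴴ v, conjTranspose_conjTranspose]
    _ = 0 := by rw [hNv, star_zero, zero_dotProduct]
  exact hv (dotProduct_star_self_eq_zero.mp this)

theorem maxGenEigenspace_toLin'_add_I_smul [DecidableEq n] (hA : A.PosSemidef)
    (hB : B.PosSemidef) (hμ : μ.re ≤ 0) :
    End.maxGenEigenspace (toLin' (A + Complex.I • B)) μ =
      End.eigenspace (toLin' (A + Complex.I • B)) μ := by
  have hN : toLin' (A + Complex.I • B) - μ • 1 = toLin' (A + Complex.I • B - μ • 1) := by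
    rw [map_sub, map_smul, toLin'_one, End.one_eq_id]
  refine End.maxGenEigenspace_eq_eigenspace_of_ker_sq fun w hw ↦ ?_
  rw [hN, toLin'_apply, toLin'_apply] at *
  exact mulVec_eq_zero_of_mulVec_mulVec_eq_zero hA hB hμ hw

end Matrix

theorem stmt3_general {q : ℕ} (D R : Matrix (Fin q) (Fin q) ℝ)
    (hD : D.PosSemidef) (hR : R.PosSemidef)
    (h2 : reLam2Nonpos (cM D R)) :
    ∃ (u : Fin q → ℂ) (σ : ℝ), u ≠ 0 ∧ (¬ ∃ c : ℂ, u = fun _ => c) ∧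
      (D.map (fun a => (a : ℂ))).mulVec u = 0 ∧
      (R.map (fun a => (a : ℂ))).mulVec u = (σ : ℂ) • u := by
  obtain ⟨μ, hμ, hE⟩ := End.exists_eigenspace_not_le (toLin' (cM D R))
    (by rwa [Matrix.charpoly_toLin'])
    (fun μ hμ ↦ maxGenEigenspace_toLin'_add_I_smul hD.map_ofReal hR.map_ofReal hμ)
    (W := ℂ ∙ fun _ ↦ 1) ((finrank_span_le_card _).trans (by simp))
  obtain ⟨u, hu, huW⟩ := SetLike.not_le_iff_exists.mp hE
  have hu0 : u ≠ 0 := by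
    rintro rfl
    exact huW (zero_mem _)
  obtain ⟨-, hDu, hRu⟩ := eigenvector_add_I_smul_of_re_nonpos hD.map_ofReal hR.map_ofReal hμ hu0
    (End.mem_eigenspace_iff.mp hu)
  refine ⟨u, μ.im, hu0, ?_, hDu, hRu⟩
  rintro ⟨c, rfl⟩
  exact huW (Submodule.mem_span_singleton.mpr ⟨c, by ext; simp⟩)

theorem stmt3 {q : ℕ} (D R : Matrix (Fin q) (Fin q) ℝ)
    (hD : D.PosSemidef) (hR : R.PosSemidef)
    (hD1 : D.mulVec (fun _ => 1) = 0) (hR1 : R.mulVec (fun _ => 1) = 0)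
    (h2 : reLam2Nonpos (cM D R)) :
    ∃ (u : Fin q → ℂ) (σ : ℝ), u ≠ 0 ∧ (¬ ∃ c : ℂ, u = fun _ => c) ∧
      (D.map (fun a => (a : ℂ))).mulVec u = 0 ∧
      (R.map (fun a => (a : ℂ))).mulVec u = (σ : ℂ) • u :=
  stmt3_general D R hD hR h2
end

section
/- Every connected finite graph admits a Laplacian matrix (with some choice of positive edge weights) such that no eigenvector of the Laplacian has a zero entry. -/
/-!
Add the edges one at a time, each new edge `e_a - e_b` touching the vertices already reached, and
keep the invariant that every eigenvector of the partial Laplacian `L` for a nonzero eigenvalue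
vanishes nowhere on the reached vertices. Adding the edge with weight `δ` is the rank-one update
`L + δ g gᵀ`, `g = e_a - e_b`. An eigenvector `u` orthogonal to `g` is one of `L`: it vanishes
nowhere on the reached vertices and everywhere else, so `u a = u b` excludes a new vertex `b`.
Otherwise `u` is a multiple of `(σ - L)⁻¹ g`, the secular
equation determines `δ` from `σ`, and `u k = 0` forces `σ` to be a root of a polynomial; that
polynomial is nonzero because by the invariant the nonzero eigenvalues of `L` are simple and
their eigenvectors do not vanish at `k`. So all but finitely many `δ` preserve the invariant.
Once all edges are in, the eigenvalue `0` has only constant eigenvectors, by connectivity.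
-/

open Matrix

/-- `G` is the incidence matrix of a graph: every column is `e_k - e_ℓ`
for some pair of distinct vertices `k, ℓ`. -/
def IsIncidence {q p : ℕ} (G : Matrix (Fin q) (Fin p) ℝ) : Prop :=
  ∀ j : Fin p, ∃ k ℓ : Fin q, k ≠ ℓ ∧
    ∀ i : Fin q, G i j = (if i = k then 1 else 0) - (if i = ℓ then 1 else 0)

open Polynomial Filter Finset

section

variable {n : Type*} [Fintype n]

lemma Matrix.IsHermitian.dotProduct_mulVec_comm {L : Matrix n n ℝ} (hL : L.IsHermitian)
    (x y : n → ℝ) : x ⬝ᵥ L *ᵥ y = L *ᵥ x ⬝ᵥ y := by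
  rw [dotProduct_mulVec, ← mulVec_transpose, ← conjTranspose_eq_transpose_of_trivial, hL.eq,
    dotProduct_comm]

lemma add_smul_vecMulVec_mulVec (L : Matrix n n ℝ) (δ : ℝ) (g u : n → ℝ) :
    (L + δ • vecMulVec g g) *ᵥ u = L *ᵥ u + (δ * (g ⬝ᵥ u)) • g := by
  rw [add_mulVec, smul_mulVec, vecMulVec_mulVec, op_smul_eq_smul, smul_smul]

lemma mulVec_apply_eq_zero_of_row {L : Matrix n n ℝ} {k : n} (hk : L k = 0) (u : n → ℝ) :
    (L *ᵥ u) k = 0 := by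
  show L k ⬝ᵥ u = 0
  rw [hk, zero_dotProduct]

end

namespace Matrix.IsHermitian

variable {n : Type*} [Fintype n] [DecidableEq n] {L : Matrix n n ℝ}

lemma eigenvectorBasis_dotProduct (hL : L.IsHermitian) (i j : n) :
    ⇑(hL.eigenvectorBasis i) ⬝ᵥ ⇑(hL.eigenvectorBasis j) = if i = j then 1 else 0 := by
  rw [← orthonormal_iff_ite.mp hL.eigenvectorBasis.orthonormal i j,
    EuclideanSpace.inner_eq_star_dotProduct, dotProduct_comm]
  rfl

lemma eigenvectorBasis_ne_zero (hL : L.IsHermitian) (i : n) : ⇑(hL.eigenvectorBasis i) ≠ 0 := by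
  intro h
  simpa [h] using hL.eigenvectorBasis_dotProduct i i

lemma sum_dotProduct_smul_eigenvectorBasis (hL : L.IsHermitian) (x : n → ℝ) :
    ∑ i, (⇑(hL.eigenvectorBasis i) ⬝ᵥ x) • ⇑(hL.eigenvectorBasis i) = x := by
  have h := congrArg WithLp.ofLp (hL.eigenvectorBasis.sum_repr' (WithLp.toLp 2 x))
  simpa [EuclideanSpace.inner_eq_star_dotProduct, dotProduct_comm] using h

lemma eigenvectorBasis_dotProduct_mulVec (hL : L.IsHermitian) (i : n) (x : n → ℝ) :
    ⇑(hL.eigenvectorBasis i) ⬝ᵥ L *ᵥ x = hL.eigenvalues i * (⇑(hL.eigenvectorBasis i) ⬝ᵥ x) := by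
  rw [hL.dotProduct_mulVec_comm, hL.mulVec_eigenvectorBasis, smul_dotProduct, smul_eq_mul]

/-- The secular function of the rank-one update `L + δ g gᵀ`; the terms with `μᵢ = σ` are `0`
by the convention `x / 0 = 0`. -/
noncomputable def secularFun (hL : L.IsHermitian) (g : n → ℝ) (σ : ℝ) : ℝ :=
  ∑ i, (⇑(hL.eigenvectorBasis i) ⬝ᵥ g) ^ 2 / (σ - hL.eigenvalues i)

/-- `∏ⱼ (X - μⱼ)` times the `k`-th entry of `(X - L)⁻¹ g`. -/
noncomputable def secularNumerator (hL : L.IsHermitian) (g : n → ℝ) (k : n) : ℝ[X] :=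
  ∑ i, C ((⇑(hL.eigenvectorBasis i) ⬝ᵥ g) * hL.eigenvectorBasis i k) *
    ∏ j ∈ univ.erase i, (X - C (hL.eigenvalues j))

variable {g u : n → ℝ} {δ σ : ℝ}

lemma eigenvectorBasis_dotProduct_mul_sub (hL : L.IsHermitian)
    (hu : (L + δ • vecMulVec g g) *ᵥ u = σ • u) (i : n) :
    (⇑(hL.eigenvectorBasis i) ⬝ᵥ u) * (σ - hL.eigenvalues i) =
      δ * (g ⬝ᵥ u) * (⇑(hL.eigenvectorBasis i) ⬝ᵥ g) := by
  have h := congrArg (⇑(hL.eigenvectorBasis i) ⬝ᵥ ·) hu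
  simp only [add_smul_vecMulVec_mulVec, dotProduct_add, dotProduct_smul, smul_eq_mul,
    hL.eigenvectorBasis_dotProduct_mulVec] at h
  linear_combination h.symm

-- Also when `s = 0`, by the convention `x / 0 = 0`.
private lemma mul_eq_mul_sq_div {a b c s : ℝ} (hc : c ≠ 0) (h : a * s = c * b) :
    a * b = c * (b ^ 2 / s) := by
  rcases eq_or_ne s 0 with rfl | hs
  · have hb : b = 0 := by simpa [hc] using h.symm
    simp [hb]
  · field_simp
    linear_combination b * h

lemma mul_secularFun_eq_one (hL : L.IsHermitian) (hu : (L + δ • vecMulVec g g) *ᵥ u = σ • u)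
    (hc : δ * (g ⬝ᵥ u) ≠ 0) : δ * hL.secularFun g σ = 1 := by
  have hexp : g ⬝ᵥ u = δ * (g ⬝ᵥ u) * hL.secularFun g σ := by
    conv_lhs => rw [← hL.sum_dotProduct_smul_eigenvectorBasis u]
    simp only [secularFun, Finset.mul_sum, dotProduct_sum, dotProduct_smul, smul_eq_mul]
    refine Finset.sum_congr rfl fun i _ => ?_
    rw [dotProduct_comm g]
    exact mul_eq_mul_sq_div hc (hL.eigenvectorBasis_dotProduct_mul_sub hu i)
  have hgu : g ⬝ᵥ u ≠ 0 := right_ne_zero_of_mul hc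
  field_simp at hexp
  linear_combination hexp.symm

lemma eval_secularNumerator (hL : L.IsHermitian) (g : n → ℝ) (k : n)
    (hσ : ∀ i, hL.eigenvalues i ≠ σ) :
    (hL.secularNumerator g k).eval σ =
      (∑ i, (⇑(hL.eigenvectorBasis i) ⬝ᵥ g) * hL.eigenvectorBasis i k / (σ - hL.eigenvalues i)) *
        ∏ j, (σ - hL.eigenvalues j) := by
  simp only [secularNumerator, eval_finsetSum, eval_mul, eval_C, eval_prod, eval_sub, eval_X,
    Finset.sum_mul]
  refine Finset.sum_congr rfl fun i _ => ?_
  rw [← Finset.mul_prod_erase univ _ (mem_univ i)]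
  have : σ - hL.eigenvalues i ≠ 0 := sub_ne_zero.mpr (hσ i).symm
  field_simp

lemma isRoot_secularNumerator (hL : L.IsHermitian) (hu : (L + δ • vecMulVec g g) *ᵥ u = σ • u)
    (hc : δ * (g ⬝ᵥ u) ≠ 0) (hσ : ∀ i, hL.eigenvalues i ≠ σ) {k : n} (hk : u k = 0) :
    (hL.secularNumerator g k).IsRoot σ := by
  have huk : u k = δ * (g ⬝ᵥ u) *
      ∑ i, (⇑(hL.eigenvectorBasis i) ⬝ᵥ g) * hL.eigenvectorBasis i k / (σ - hL.eigenvalues i) := by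
    conv_lhs => rw [← hL.sum_dotProduct_smul_eigenvectorBasis u]
    simp only [Finset.sum_apply, Pi.smul_apply, smul_eq_mul, Finset.mul_sum]
    refine Finset.sum_congr rfl fun i _ => ?_
    have : σ - hL.eigenvalues i ≠ 0 := sub_ne_zero.mpr (hσ i).symm
    rw [mul_div_assoc', eq_div_iff this]
    linear_combination (hL.eigenvectorBasis i k) * hL.eigenvectorBasis_dotProduct_mul_sub hu i
  rw [IsRoot, hL.eval_secularNumerator g k hσ]
  rw [hk] at huk
  simp [(mul_eq_zero.mp huk.symm).resolve_left hc]

lemma secularNumerator_ne_zero (hL : L.IsHermitian) {i k : n}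
    (hsimple : ∀ j ≠ i, hL.eigenvalues j ≠ hL.eigenvalues i)
    (hgi : ⇑(hL.eigenvectorBasis i) ⬝ᵥ g ≠ 0) (hik : hL.eigenvectorBasis i k ≠ 0) :
    hL.secularNumerator g k ≠ 0 := by
  have heval : (hL.secularNumerator g k).eval (hL.eigenvalues i) =
      (⇑(hL.eigenvectorBasis i) ⬝ᵥ g) * hL.eigenvectorBasis i k *
        ∏ j ∈ univ.erase i, (hL.eigenvalues i - hL.eigenvalues j) := by
    simp only [secularNumerator, eval_finsetSum, eval_mul, eval_C, eval_prod, eval_sub, eval_X]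
    refine Finset.sum_eq_single i (fun j _ hji => ?_) (by simp)
    rw [Finset.prod_eq_zero (mem_erase.mpr ⟨hji.symm, mem_univ i⟩) (sub_self _), mul_zero]
  have hprod : ∏ j ∈ univ.erase i, (hL.eigenvalues i - hL.eigenvalues j) ≠ 0 :=
    Finset.prod_ne_zero_iff.mpr fun j hj => sub_ne_zero.mpr (hsimple j (ne_of_mem_erase hj)).symm
  intro h0
  rw [h0, eval_zero] at heval
  exact mul_ne_zero (mul_ne_zero hgi hik) hprod heval.symm

/-- An eigenvalue `σ` with `δ * (g ⬝ᵥ u) ≠ 0` satisfies `δ = (secularFun σ)⁻¹`, and `σ` is an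
eigenvalue of `L` or, if `u k = 0`, a root of `secularNumerator g k`. -/
lemma eventually_rankOne_eigenvector_apply_ne_zero (hL : L.IsHermitian) (g : n → ℝ)
    (S : Finset n) (hS : ∀ k ∈ S, hL.secularNumerator g k ≠ 0) :
    ∀ᶠ δ in cofinite, ∀ (σ : ℝ) (u : n → ℝ), (L + δ • vecMulVec g g) *ᵥ u = σ • u →
      δ * (g ⬝ᵥ u) ≠ 0 → ∀ k ∈ S, u k ≠ 0 := by
  set bad : Set ℝ := Set.range hL.eigenvalues ∪ ⋃ k ∈ S, (hL.secularNumerator g k).rootSet ℝ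
  have hbad : bad.Finite :=
    (Set.finite_range _).union (S.finite_toSet.biUnion fun k hk => rootSet_finite _ _)
  refine (hbad.image fun σ => (hL.secularFun g σ)⁻¹).eventually_cofinite_notMem.mono ?_
  intro δ hδ σ u hu hc k hk huk
  refine hδ ⟨σ, ?_, (eq_inv_of_mul_eq_one_left (hL.mul_secularFun_eq_one hu hc)).symm⟩
  by_cases hσ : ∃ i, hL.eigenvalues i = σ
  · exact Or.inl hσ
  · push Not at hσ
    refine Or.inr (Set.mem_biUnion hk ?_)
    rw [mem_rootSet]
    exact ⟨hS k hk, hL.isRoot_secularNumerator hu hc hσ huk⟩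

lemma exists_eigenvalue_ne_zero_dotProduct_ne_zero (hL : L.IsHermitian) (hg : L *ᵥ g ≠ 0) :
    ∃ i, hL.eigenvalues i ≠ 0 ∧ ⇑(hL.eigenvectorBasis i) ⬝ᵥ g ≠ 0 := by
  by_contra! h
  refine hg ?_
  rw [← hL.sum_dotProduct_smul_eigenvectorBasis g, mulVec_sum]
  refine Finset.sum_eq_zero fun i _ => ?_
  rw [mulVec_smul, hL.mulVec_eigenvectorBasis]
  rcases eq_or_ne (hL.eigenvalues i) 0 with h0 | h0
  · simp [h0]
  · simp [h i h0]

end Matrix.IsHermitian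

section

variable {n : Type*} [DecidableEq n]

def edgeVec (a b : n) : n → ℝ := Pi.single a 1 - Pi.single b 1

lemma edgeVec_swap (a b : n) : edgeVec b a = -edgeVec a b := by
  simp [edgeVec]

lemma edgeVec_dotProduct [Fintype n] (a b : n) (u : n → ℝ) : edgeVec a b ⬝ᵥ u = u a - u b := by
  simp [edgeVec, sub_dotProduct]

end

def EigenvectorsNonvanishingOn {n : Type*} [Fintype n] (L : Matrix n n ℝ) (S : Finset n) : Prop :=
  ∀ σ : ℝ, σ ≠ 0 → ∀ u : n → ℝ, u ≠ 0 → L *ᵥ u = σ • u → ∀ k ∈ S, u k ≠ 0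

namespace EigenvectorsNonvanishingOn

variable {n : Type*} [Fintype n] [DecidableEq n] {L : Matrix n n ℝ} {S : Finset n}

lemma eigenvectorBasis_apply_ne_zero (hS : EigenvectorsNonvanishingOn L S) (hL : L.IsHermitian)
    {i : n} (hi : hL.eigenvalues i ≠ 0) {k : n} (hk : k ∈ S) : hL.eigenvectorBasis i k ≠ 0 :=
  hS (hL.eigenvalues i) hi _ (hL.eigenvectorBasis_ne_zero i) (hL.mulVec_eigenvectorBasis i) k hk

/-- If `μᵢ = μⱼ ≠ 0`, the combination `vᵢ(k) vⱼ - vⱼ(k) vᵢ` would be an eigenvector vanishing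
at `k`; it is nonzero because its inner product with `vⱼ` is `vᵢ(k) ≠ 0`. -/
lemma eigenvalues_ne (hS : EigenvectorsNonvanishingOn L S) (hL : L.IsHermitian) {k : n}
    (hk : k ∈ S) {i j : n} (hi : hL.eigenvalues i ≠ 0) (hji : j ≠ i) :
    hL.eigenvalues j ≠ hL.eigenvalues i := by
  intro heq
  set v := fun i => ⇑(hL.eigenvectorBasis i)
  have hvi : v i k ≠ 0 := hS.eigenvectorBasis_apply_ne_zero hL hi hk
  set w := v i k • v j - v j k • v i
  have hw : L *ᵥ w = hL.eigenvalues i • w := by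
    simp only [w, v, mulVec_sub, mulVec_smul, hL.mulVec_eigenvectorBasis, heq, smul_comm _ (v i k),
      smul_comm _ (v j k), smul_sub]
  have hvjw : v j ⬝ᵥ w = v i k := by
    simp [w, v, dotProduct_sub, hL.eigenvectorBasis_dotProduct, hji]
  have hw0 : w ≠ 0 := fun h => hvi (by rw [← hvjw, h, dotProduct_zero])
  exact hS _ hi w hw0 hw k hk (by simp [w, mul_comm])

lemma secularNumerator_ne_zero (hS : EigenvectorsNonvanishingOn L S) (hL : L.IsHermitian)
    {g : n → ℝ} (hg : L *ᵥ g ≠ 0) {k : n} (hk : k ∈ S) : hL.secularNumerator g k ≠ 0 := by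
  obtain ⟨i, hi, hgi⟩ := hL.exists_eigenvalue_ne_zero_dotProduct_ne_zero hg
  exact hL.secularNumerator_ne_zero (fun j hji => hS.eigenvalues_ne hL hk hi hji) hgi
    (hS.eigenvectorBasis_apply_ne_zero hL hi hk)

lemma eventually_add_edge (hS : EigenvectorsNonvanishingOn L S) (hL : L.IsHermitian)
    (hrows : ∀ k ∉ S, L k = 0) {a b : n} (hab : a ≠ b)
    (hstart : S = ∅ ∨ a ∈ S ∧ L *ᵥ (edgeVec a b) ≠ 0) :
    ∀ᶠ δ : ℝ in cofinite, EigenvectorsNonvanishingOn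
      (L + δ • vecMulVec (edgeVec a b) (edgeVec a b)) (insert a (insert b S)) := by
  set g := edgeVec a b
  have hQ : ∀ k ∈ S, hL.secularNumerator g k ≠ 0 := by
    rcases hstart with rfl | ⟨-, hLg⟩
    · simp
    · exact fun k hk => hS.secularNumerator_ne_zero hL hLg hk
  have hnew : ∀ k ∈ insert a (insert b S), k ∉ S → k = a ∨ k = b := fun k hk hkS => by
    simp only [mem_insert] at hk
    tauto
  filter_upwards [hL.eventually_rankOne_eigenvector_apply_ne_zero g S hQ, eventually_cofinite_ne 0]
    with δ hδ hδ0 σ hσ u hu heig k hk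
  rw [add_smul_vecMulVec_mulVec] at heig
  have hout : ∀ k ∉ S, σ * u k = δ * (g ⬝ᵥ u) * g k := fun k hk => by
    simpa [mulVec_apply_eq_zero_of_row (hrows k hk)] using (congrFun heig k).symm
  by_cases hc : δ * (g ⬝ᵥ u) = 0
  · rw [hc, zero_smul, add_zero] at heig
    have hvan : ∀ k ∉ S, u k = 0 := fun k hk => by simpa [hc, hσ] using hout k hk
    rcases hstart with rfl | ⟨haS, -⟩
    · exact absurd (funext fun k => hvan k (notMem_empty k)) hu
    by_cases hkS : k ∈ S
    · exact hS σ hσ u hu heig k hkS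
    -- `k` is the new vertex `b`, so `0 = g ⬝ᵥ u = u a - u b = u a`.
    have hbS : b ∉ S := by
      rcases hnew k hk hkS with rfl | rfl
      · exact absurd haS hkS
      · exact hkS
    have hua : u a = 0 := by
      have := (mul_eq_zero.mp hc).resolve_left hδ0
      rw [edgeVec_dotProduct, hvan b hbS] at this
      simpa using this
    exact absurd hua (hS σ hσ u hu heig a haS)
  · by_cases hkS : k ∈ S
    · exact hδ σ u (by rw [add_smul_vecMulVec_mulVec]; exact heig) hc k hkS
    have hgk : g k ≠ 0 := by
      rcases hnew k hk hkS with rfl | rfl <;> simp [g, edgeVec, hab, hab.symm]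
    intro huk
    have := hout k hkS
    rw [huk, mul_zero] at this
    exact mul_ne_zero hc hgk this.symm

end EigenvectorsNonvanishingOn

section WeightedLaplacian

variable {V E : Type*} [Fintype E] [DecidableEq E]

lemma isHermitian_mul_diagonal_mul_transpose (G : Matrix V E ℝ) (w : E → ℝ) :
    (G * diagonal w * Gᵀ).IsHermitian := by
  simpa [conjTranspose_eq_transpose_of_trivial] using
    isHermitian_mul_mul_conjTranspose G (isHermitian_diagonal w)

lemma dotProduct_mul_diagonal_mul_transpose_mulVec [Fintype V] (G : Matrix V E ℝ) (w : E → ℝ)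
    (x : V → ℝ) : x ⬝ᵥ (G * diagonal w * Gᵀ) *ᵥ x = ∑ j, w j * (Gᵀ *ᵥ x) j ^ 2 := by
  rw [← mulVec_mulVec, ← mulVec_mulVec, dotProduct_mulVec, ← mulVec_transpose]
  simp only [dotProduct, mulVec_diagonal, sq]
  exact Finset.sum_congr rfl fun j _ => by ring

lemma transpose_mulVec_apply_eq_zero [Fintype V] {G : Matrix V E ℝ} {w : E → ℝ}
    (hw : ∀ j, 0 ≤ w j) {x : V → ℝ} (hx : (G * diagonal w * Gᵀ) *ᵥ x = 0) {j : E}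
    (hj : 0 < w j) : (Gᵀ *ᵥ x) j = 0 := by
  have h := dotProduct_mul_diagonal_mul_transpose_mulVec G w x
  rw [hx, dotProduct_zero, eq_comm,
    Finset.sum_eq_zero_iff_of_nonneg fun j _ => mul_nonneg (hw j) (sq_nonneg _)] at h
  simpa [hj.ne'] using h j (mem_univ j)

lemma mul_diagonal_single_mul_transpose (G : Matrix V E ℝ) (j : E) (δ : ℝ) :
    G * diagonal (Pi.single j δ) * Gᵀ = δ • vecMulVec (Gᵀ j) (Gᵀ j) := by
  ext a b
  rw [mul_apply]
  simp [mul_diagonal, Pi.single_apply, vecMulVec_apply]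
  ring

lemma mul_diagonal_update_mul_transpose (G : Matrix V E ℝ) {w : E → ℝ} {j : E} (hj : w j = 0)
    (δ : ℝ) : G * diagonal (Function.update w j δ) * Gᵀ =
      G * diagonal w * Gᵀ + δ • vecMulVec (Gᵀ j) (Gᵀ j) := by
  rw [Pi.update_eq_sub_add_single, hj, Pi.single_zero, sub_zero,
    show diagonal (w + Pi.single j δ) = diagonal w + diagonal (Pi.single j δ) from
      (diagonal_add _ _).symm,
    Matrix.mul_add, Matrix.add_mul, mul_diagonal_single_mul_transpose]

lemma mul_diagonal_mul_transpose_row_eq_zero (G : Matrix V E ℝ) {w : E → ℝ} {k : V}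
    (hk : ∀ j, w j ≠ 0 → G k j = 0) : (G * diagonal w * Gᵀ) k = 0 := by
  ext m
  rw [mul_apply]
  refine Finset.sum_eq_zero fun j _ => ?_
  by_cases hj : w j = 0
  · simp [mul_diagonal, hj]
  · simp [mul_diagonal, hk j hj]

end WeightedLaplacian

section Graph

variable {V E : Type*} [DecidableEq V] {s t : E → V}

def incidenceMatrix (s t : E → V) : Matrix V E ℝ := of fun i j => edgeVec (s j) (t j) i

lemma transpose_incidenceMatrix_mulVec_apply [Fintype V] (x : V → ℝ) (j : E) :
    ((incidenceMatrix s t)ᵀ *ᵥ x) j = x (s j) - x (t j) :=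
  edgeVec_dotProduct (s j) (t j) x

def endpoints (s t : E → V) (P : Finset E) : Finset V := P.biUnion fun j => {s j, t j}

lemma left_mem_endpoints {P : Finset E} {j : E} (hj : j ∈ P) : s j ∈ endpoints s t P :=
  mem_biUnion.mpr ⟨j, hj, mem_insert_self _ _⟩

lemma right_mem_endpoints {P : Finset E} {j : E} (hj : j ∈ P) : t j ∈ endpoints s t P :=
  mem_biUnion.mpr ⟨j, hj, mem_insert_of_mem (mem_singleton_self _)⟩

/-- The edges in `P` form a connected graph on their endpoints. -/
def EdgesConnected (s t : E → V) (P : Finset E) : Prop :=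
  ∀ x : V → ℝ, (∀ j ∈ P, x (s j) = x (t j)) →
    ∀ k ∈ endpoints s t P, ∀ l ∈ endpoints s t P, x k = x l

lemma EdgesConnected.insert_edge [DecidableEq E] {P : Finset E} (hP : EdgesConnected s t P) {j : E}
    (hj : P = ∅ ∨ s j ∈ endpoints s t P ∨ t j ∈ endpoints s t P) :
    EdgesConnected s t (insert j P) := by
  intro x hx
  have hxj : x (s j) = x (t j) := hx j (mem_insert_self j P)
  suffices h : ∀ k ∈ endpoints s t (insert j P), x k = x (s j) from
    fun k hk l hl => (h k hk).trans (h l hl).symm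
  intro k hk
  simp only [endpoints, biUnion_insert, mem_union, mem_insert, mem_singleton] at hk
  rcases hk with (rfl | rfl) | hk
  · rfl
  · exact hxj.symm
  have hxP : ∀ i ∈ P, x (s i) = x (t i) := fun i hi => hx i (mem_insert_of_mem hi)
  rcases hj with rfl | hs | ht
  · simp at hk
  · exact hP x hxP k hk (s j) hs
  · exact (hP x hxP k hk (t j) ht).trans hxj.symm

lemma exists_mem_endpoints_ne (hst : ∀ j, s j ≠ t j) {P : Finset E} {a : V}
    (ha : a ∈ endpoints s t P) : ∃ l ∈ endpoints s t P, l ≠ a := by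
  obtain ⟨j, hj, ha⟩ := mem_biUnion.mp ha
  rcases mem_insert.mp ha with rfl | ha
  · exact ⟨t j, right_mem_endpoints hj, (hst j).symm⟩
  · exact ⟨s j, left_mem_endpoints hj, by rw [mem_singleton.mp ha]; exact hst j⟩

variable [Fintype V] [Fintype E]

lemma eq_of_notMem_endpoints_univ
    (hconn : ∀ x : V → ℝ, (incidenceMatrix s t)ᵀ *ᵥ x = 0 → ∃ c : ℝ, x = fun _ => c)
    {i : V} (hi : i ∉ endpoints s t univ) (k : V) : k = i := by
  have hfar : ∀ j, s j ≠ i ∧ t j ≠ i := fun j =>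
    ⟨fun h => hi (h ▸ left_mem_endpoints (mem_univ j)),
      fun h => hi (h ▸ right_mem_endpoints (mem_univ j))⟩
  obtain ⟨c, hc⟩ := hconn (Pi.single i 1) <| funext fun j => by
    simp [transpose_incidenceMatrix_mulVec_apply, (hfar j).1, (hfar j).2]
  have hc1 : c = 1 := by simpa using (congrFun hc i).symm
  by_contra hki
  simpa [hki, hc1] using congrFun hc k

lemma exists_touching_edge
    (hconn : ∀ x : V → ℝ, (incidenceMatrix s t)ᵀ *ᵥ x = 0 → ∃ c : ℝ, x = fun _ => c)
    {P : Finset E} (hP : P ≠ univ) :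
    ∃ j ∉ P, P = ∅ ∨ s j ∈ endpoints s t P ∨ t j ∈ endpoints s t P := by
  obtain ⟨j₀, hj₀⟩ : ∃ j, j ∉ P := by
    by_contra! h
    exact hP (eq_univ_of_forall h)
  by_contra! hfar
  -- the indicator of the endpoints of `P` would be constant along every edge
  set x : V → ℝ := fun i => if i ∈ endpoints s t P then 1 else 0
  obtain ⟨c, hc⟩ := hconn x <| funext fun j => by
    rw [transpose_incidenceMatrix_mulVec_apply, Pi.zero_apply, sub_eq_zero]
    by_cases hj : j ∈ P
    · simp [x, left_mem_endpoints hj, right_mem_endpoints hj]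
    · simp [x, (hfar j hj).2.1, (hfar j hj).2.2]
  obtain ⟨j₁, hj₁⟩ := (hfar j₀ hj₀).1
  have h₁ : x (s j₁) = 1 := if_pos (left_mem_endpoints hj₁)
  have h₀ : x (s j₀) = 0 := if_neg (hfar j₀ hj₀).2.1
  rw [hc] at h₀ h₁
  exact one_ne_zero (h₁.symm.trans h₀)

variable [DecidableEq E]

/-- The invariant of the construction, which adds the edges of `P` one at a time. -/
structure IsGoodWeighting (s t : E → V) (P : Finset E) (w : E → ℝ) : Prop where
  pos : ∀ j ∈ P, 0 < w j
  eq_zero : ∀ j ∉ P, w j = 0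
  connected : EdgesConnected s t P
  nonvanishing : EigenvectorsNonvanishingOn
    (incidenceMatrix s t * diagonal w * (incidenceMatrix s t)ᵀ) (endpoints s t P)

namespace IsGoodWeighting

variable {P : Finset E} {w : E → ℝ}

lemma empty : IsGoodWeighting s t ∅ 0 :=
  ⟨by simp, fun _ _ => rfl, fun _ _ k hk => by simp [endpoints] at hk,
    fun _ _ _ _ _ k hk => by simp [endpoints] at hk⟩

lemma nonneg (h : IsGoodWeighting s t P w) (j : E) : 0 ≤ w j := by
  by_cases hj : j ∈ P
  · exact (h.pos j hj).le
  · exact (h.eq_zero j hj).ge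

lemma row_eq_zero (h : IsGoodWeighting s t P w) {k : V} (hk : k ∉ endpoints s t P) :
    (incidenceMatrix s t * diagonal w * (incidenceMatrix s t)ᵀ) k = 0 := by
  refine mul_diagonal_mul_transpose_row_eq_zero _ fun j hj => ?_
  have hjP : j ∈ P := by_contra fun hjP => hj (h.eq_zero j hjP)
  have hks : k ≠ s j := fun h' => hk (h' ▸ left_mem_endpoints hjP)
  have hkt : k ≠ t j := fun h' => hk (h' ▸ right_mem_endpoints hjP)
  simp [incidenceMatrix, edgeVec, hks, hkt]

/-- A function in the kernel is constant along the edges of `P`, hence on its endpoints;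
`edgeVec a b` is not, as `a` has a neighbour other than itself. -/
lemma mulVec_edgeVec_ne_zero (h : IsGoodWeighting s t P w) (hst : ∀ j, s j ≠ t j) {a b : V}
    (hab : a ≠ b) (ha : a ∈ endpoints s t P) :
    (incidenceMatrix s t * diagonal w * (incidenceMatrix s t)ᵀ) *ᵥ edgeVec a b ≠ 0 := by
  intro hker
  have hconst : ∀ j ∈ P, edgeVec a b (s j) = edgeVec a b (t j) := fun j hj => by
    have := transpose_mulVec_apply_eq_zero h.nonneg hker (h.pos j hj)
    rwa [transpose_incidenceMatrix_mulVec_apply, sub_eq_zero] at this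
  obtain ⟨l, hl, hla⟩ := exists_mem_endpoints_ne hst ha
  have := h.connected _ hconst a ha l hl
  by_cases hlb : l = b
  · simp [edgeVec, hlb, hab, hab.symm] at this
    norm_num at this
  · simp [edgeVec, hab, hla, hlb] at this

lemma exists_insert (h : IsGoodWeighting s t P w) (hst : ∀ j, s j ≠ t j) {j : E} (hj : j ∉ P)
    (htouch : P = ∅ ∨ s j ∈ endpoints s t P ∨ t j ∈ endpoints s t P) :
    ∃ w', IsGoodWeighting s t (insert j P) w' := by
  set G := incidenceMatrix s t
  obtain ⟨a, b, hab, ha, hends, hvec⟩ : ∃ a b, a ≠ b ∧ (P = ∅ ∨ a ∈ endpoints s t P) ∧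
      insert a (insert b (endpoints s t P)) = endpoints s t (insert j P) ∧
      vecMulVec (edgeVec a b) (edgeVec a b) = vecMulVec (Gᵀ j) (Gᵀ j) := by
    have hends : endpoints s t (insert j P) = insert (s j) (insert (t j) (endpoints s t P)) := by
      rw [endpoints, biUnion_insert, insert_union, singleton_union]
      rfl
    rcases htouch with hP | hs | ht
    · exact ⟨s j, t j, hst j, Or.inl hP, hends.symm, rfl⟩
    · exact ⟨s j, t j, hst j, Or.inr hs, hends.symm, rfl⟩
    · refine ⟨t j, s j, (hst j).symm, Or.inr ht, by rw [hends, insert_comm], ?_⟩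
      rw [edgeVec_swap, neg_vecMulVec, vecMulVec_neg, neg_neg]
      rfl
  have hstart : endpoints s t P = ∅ ∨
      a ∈ endpoints s t P ∧ (G * diagonal w * Gᵀ) *ᵥ edgeVec a b ≠ 0 := by
    rcases ha with rfl | ha
    · exact Or.inl biUnion_empty
    · exact Or.inr ⟨ha, h.mulVec_edgeVec_ne_zero hst hab ha⟩
  obtain ⟨δ, hδ, hδpos⟩ := (((h.nonvanishing.eventually_add_edge
    (isHermitian_mul_diagonal_mul_transpose G w) (fun k => h.row_eq_zero) hab hstart).filter_mono
      atTop_le_cofinite).and (Filter.eventually_gt_atTop 0)).exists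
  refine ⟨Function.update w j δ, fun i hi => ?_, fun i hi => ?_, h.connected.insert_edge htouch,
    ?_⟩
  · rcases mem_insert.mp hi with rfl | hi
    · simpa using hδpos
    · simpa [Function.update_apply, ne_of_mem_of_not_mem hi hj] using h.pos i hi
  · have hij : i ≠ j := fun hij => hi (hij ▸ mem_insert_self j P)
    simpa [Function.update_apply, hij] using h.eq_zero i (fun hiP => hi (mem_insert_of_mem hiP))
  · rw [mul_diagonal_update_mul_transpose G (h.eq_zero j hj), ← hvec, ← hends]
    exact hδ

end IsGoodWeighting

lemma exists_isGoodWeighting_univ (hst : ∀ j, s j ≠ t j)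
    (hconn : ∀ x : V → ℝ, (incidenceMatrix s t)ᵀ *ᵥ x = 0 → ∃ c : ℝ, x = fun _ => c) :
    ∃ w, IsGoodWeighting s t univ w := by
  suffices h : ∀ m ≤ Fintype.card E, ∃ P : Finset E, P.card = m ∧ ∃ w, IsGoodWeighting s t P w by
    obtain ⟨P, hP, w, hw⟩ := h _ le_rfl
    rw [card_eq_iff_eq_univ] at hP
    exact ⟨w, hP ▸ hw⟩
  intro m
  induction m with
  | zero => exact fun _ => ⟨∅, rfl, 0, IsGoodWeighting.empty⟩
  | succ m ih =>
    intro hm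
    obtain ⟨P, rfl, w, hw⟩ := ih (Nat.le_of_succ_le hm)
    have hP : P ≠ univ := fun hP => by simp [hP] at hm
    obtain ⟨j, hj, htouch⟩ := exists_touching_edge hconn hP
    obtain ⟨w', hw'⟩ := hw.exists_insert hst hj htouch
    exact ⟨insert j P, card_insert_of_notMem hj, w', hw'⟩

end Graph

/-- Every connected finite graph admits a Laplacian (for some choice of positive
edge weights) none of whose eigenvectors has a zero entry. -/
theorem stmt6 {q p : ℕ} (G : Matrix (Fin q) (Fin p) ℝ) (hG : IsIncidence G)
    (hconn : ∀ v : Fin q → ℝ, Gᵀ.mulVec v = 0 → ∃ c : ℝ, v = fun _ => c) :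
    ∃ w : Fin p → ℝ, (∀ j, 0 < w j) ∧
      ∀ (u : Fin q → ℝ) (σ : ℝ), u ≠ 0 →
        (G * diagonal w * Gᵀ).mulVec u = σ • u → ∀ i, u i ≠ 0 := by
  choose s t hst hcol using hG
  obtain rfl : G = incidenceMatrix s t := by
    ext i j
    simp [hcol, incidenceMatrix, edgeVec, Pi.single_apply]
  obtain ⟨w, hw⟩ := exists_isGoodWeighting_univ hst hconn
  have hpos : ∀ j, 0 < w j := fun j => hw.pos j (mem_univ j)
  refine ⟨w, hpos, fun u σ hu heig i => ?_⟩
  obtain ⟨m, hm⟩ := Function.ne_iff.mp hu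
  rcases eq_or_ne σ 0 with rfl | hσ
  · rw [zero_smul] at heig
    obtain ⟨c, rfl⟩ := hconn u <| funext fun j =>
      transpose_mulVec_apply_eq_zero hw.nonneg heig (hpos j)
    exact hm
  · by_cases hi : i ∈ endpoints s t univ
    · exact hw.nonvanishing σ hσ u hu heig i hi
    · rwa [eq_of_notMem_endpoints_univ hconn hi m] at hm
end

section
/- Let L ∈ ℝ^{q×q} be a Laplacian of a connected graph (symmetric PSD, L·1 = 0, with one-dimensional kernel) and let b = e_k − e_ℓ for distinct indices k, ℓ. If no eigenvector of L has a zero entry, then for all sufficiently small w > 0, no eigenvector of L + w·b·bᵀ has a zero entry. -/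
/-!
Having an eigenvector whose `i`-th entry vanishes is a closed condition on a real matrix `A`:
after normalising the eigenvector to the unit sphere and eliminating the eigenvalue through the
Rayleigh quotient, it says that some point `u` of a compact set solves the polynomial equations
`u i = 0`, `(u ⬝ u) A u = (u ⬝ A u) u`, and projections along a compact factor are closed maps.
So the matrices with no such eigenvector form an open set; it contains `L`, hence `L + w b bᵀ`
for all small `w`.
-/

open Matrix Filter Topology Metric

namespace Matrix

variable {n : Type*} [Fintype n]

def HasEigenvectorVanishingAt (A : Matrix n n ℝ) (i : n) : Prop :=
  ∃ u : n → ℝ, u ≠ 0 ∧ u i = 0 ∧ ∃ σ : ℝ, A *ᵥ u = σ • u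

theorem exists_mulVec_eq_smul_iff {A : Matrix n n ℝ} {u : n → ℝ} (hu : u ≠ 0) :
    (∃ σ : ℝ, A *ᵥ u = σ • u) ↔ (u ⬝ᵥ u) • A *ᵥ u = (u ⬝ᵥ A *ᵥ u) • u := by
  have huu : u ⬝ᵥ u ≠ 0 := dotProduct_self_eq_zero.not.mpr hu
  constructor
  · rintro ⟨σ, hσ⟩
    rw [hσ, dotProduct_smul, smul_eq_mul, smul_smul, mul_comm]
  · intro h
    refine ⟨(u ⬝ᵥ A *ᵥ u) / (u ⬝ᵥ u), ?_⟩
    rw [div_eq_inv_mul, ← smul_smul, ← h, smul_smul, inv_mul_cancel₀ huu, one_smul]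

theorem hasEigenvectorVanishingAt_iff_exists_mem_sphere {A : Matrix n n ℝ} {i : n} :
    A.HasEigenvectorVanishingAt i ↔
      ∃ u ∈ sphere (0 : n → ℝ) 1, u i = 0 ∧ (u ⬝ᵥ u) • A *ᵥ u = (u ⬝ᵥ A *ᵥ u) • u := by
  constructor
  · rintro ⟨u, hu, hui, σ, hσ⟩
    have hnorm : ‖u‖ ≠ 0 := norm_ne_zero_iff.mpr hu
    refine ⟨‖u‖⁻¹ • u, ?_, by simp [hui], ?_⟩
    · simp [norm_smul, hnorm]
    · rw [← exists_mulVec_eq_smul_iff (smul_ne_zero (inv_ne_zero hnorm) hu)]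
      exact ⟨σ, by rw [mulVec_smul, hσ, smul_comm]⟩
  · rintro ⟨u, hu, hui, h⟩
    have hu0 : u ≠ 0 := ne_of_mem_sphere hu one_ne_zero
    exact ⟨u, hu0, hui, (exists_mulVec_eq_smul_iff hu0).mpr h⟩

theorem isClosed_setOf_hasEigenvectorVanishingAt {X : Type*} [TopologicalSpace X]
    {M : X → Matrix n n ℝ} (hM : Continuous M) (i : n) :
    IsClosed {x | (M x).HasEigenvectorVanishingAt i} := by
  have hclosed : IsClosed {p : X × sphere (0 : n → ℝ) 1 | (p.2 : n → ℝ) i = 0 ∧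
      ((p.2 : n → ℝ) ⬝ᵥ p.2) • M p.1 *ᵥ p.2 = ((p.2 : n → ℝ) ⬝ᵥ M p.1 *ᵥ p.2) • p.2} := by
    have hu : Continuous fun p : X × sphere (0 : n → ℝ) 1 ↦ (p.2 : n → ℝ) := by fun_prop
    refine (isClosed_eq ((continuous_apply i).comp hu) continuous_const).inter
      (isClosed_eq ?_ ?_) <;> fun_prop
  convert isClosedMap_fst_of_compactSpace _ hclosed using 1
  ext x
  simp [hasEigenvectorVanishingAt_iff_exists_mem_sphere, and_left_comm]

theorem eventually_not_hasEigenvectorVanishingAt {X : Type*} [TopologicalSpace X]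
    {M : X → Matrix n n ℝ} (hM : Continuous M) {x₀ : X}
    (h : ∀ i, ¬(M x₀).HasEigenvectorVanishingAt i) :
    ∀ᶠ x in 𝓝 x₀, ∀ i, ¬(M x).HasEigenvectorVanishingAt i :=
  eventually_all.mpr fun i ↦
    (isClosed_setOf_hasEigenvectorVanishingAt hM i).isOpen_compl.mem_nhds (h i)

end Matrix

theorem stmt7_general {q : ℕ} (L : Matrix (Fin q) (Fin q) ℝ)
    (k ℓ : Fin q)
    (hnz : ∀ (u : Fin q → ℝ) (σ : ℝ), u ≠ 0 → L.mulVec u = σ • u → ∀ i, u i ≠ 0) :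
    ∃ w₀ : ℝ, 0 < w₀ ∧ ∀ w : ℝ, 0 < w → w < w₀ →
      ∀ (u : Fin q → ℝ) (σ : ℝ), u ≠ 0 →
        (L + w • vecMulVec
            (fun i => (if i = k then 1 else 0) - (if i = ℓ then 1 else 0))
            (fun i => (if i = k then 1 else 0) - (if i = ℓ then 1 else 0))).mulVec u
          = σ • u →
        ∀ i, u i ≠ 0 := by
  set b : Fin q → ℝ := fun i => (if i = k then 1 else 0) - (if i = ℓ then 1 else 0)
  have hL : ∀ i, ¬L.HasEigenvectorVanishingAt i :=
    fun i ⟨u, hu, hui, σ, hσ⟩ ↦ hnz u σ hu hσ i hui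
  obtain ⟨w₀, hw₀, hball⟩ := Metric.eventually_nhds_iff.mp <|
    eventually_not_hasEigenvectorVanishingAt (M := fun w : ℝ ↦ L + w • vecMulVec b b)
      (by fun_prop) (x₀ := 0) (by simpa using hL)
  refine ⟨w₀, hw₀, fun w hw hww₀ u σ hu hσ i hui ↦ ?_⟩
  have hdist : dist w 0 < w₀ := by rwa [Real.dist_0_eq_abs, abs_of_pos hw]
  exact hball hdist i ⟨u, hu, hui, σ, hσ⟩

/-- Rank-one perturbation of a connected-graph Laplacian along a new edge
`b = e_k - e_ℓ`: if no eigenvector of `L` has a zero entry, then for all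
sufficiently small weights `w > 0` no eigenvector of `L + w·b·bᵀ` has a
zero entry. -/
theorem stmt7 {q : ℕ} (L : Matrix (Fin q) (Fin q) ℝ)
    (hL : L.PosSemidef) (hLsym : Lᵀ = L)
    (hL1 : L.mulVec (fun _ => 1) = 0)
    (hker : ∀ v : Fin q → ℝ, L.mulVec v = 0 → ∃ c : ℝ, v = fun _ => c)
    (k ℓ : Fin q) (hkl : k ≠ ℓ)
    (hnz : ∀ (u : Fin q → ℝ) (σ : ℝ), u ≠ 0 → L.mulVec u = σ • u → ∀ i, u i ≠ 0) :
    ∃ w₀ : ℝ, 0 < w₀ ∧ ∀ w : ℝ, 0 < w → w < w₀ →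
      ∀ (u : Fin q → ℝ) (σ : ℝ), u ≠ 0 →
        (L + w • vecMulVec
            (fun i => (if i = k then 1 else 0) - (if i = ℓ then 1 else 0))
            (fun i => (if i = k then 1 else 0) - (if i = ℓ then 1 else 0))).mulVec u
          = σ • u →
        ∀ i, u i ≠ 0 :=
  stmt7_general L k ℓ hnz
end

section
/- Let L be a real symmetric q×q matrix with distinct eigenvalues σ₁,…,σ_q and orthonormal eigenvectors u₁,…,u_q, and let E be symmetric with ‖E‖ ≤ δ. If u is a unit eigenvector of L + E with (L+E)u = (σ₁ + h)u where |h| ≤ δ and 2δ < c₁ := min_{i≠j}|σᵢ − σⱼ|, then the component of u orthogonal to u₁ has norm at most 4δ/c₁. -/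
open Matrix

/-- Euclidean dot product on `Fin q → ℝ`. -/
def rdot {q : ℕ} (u v : Fin q → ℝ) : ℝ := ∑ t, u t * v t

/-- Euclidean norm on `Fin q → ℝ`. -/
noncomputable def rnorm {q : ℕ} (u : Fin q → ℝ) : ℝ := Real.sqrt (∑ t, u t ^ 2)

/-!
Expand `u` in the eigenbasis `U` of `L`. Pairing `(L + E) u = (σ i₁ + h) u` with `U i` and using
the symmetry of `L` gives `(σ i₁ + h - σ i) ⟨U i, u⟩ = ⟨U i, E u⟩`, and for `i ≠ i₁` the factor
`σ i₁ + h - σ i` has modulus at least `c₁ - δ > c₁ / 2`. By Parseval the component of `u`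
orthogonal to `U i₁` therefore has norm at most `‖E u‖ / (c₁ / 2) ≤ 2δ / c₁`.
-/

section Orthonormal

variable {q : ℕ} {U : Fin q → Fin q → ℝ}

lemma rnorm_nonneg (v : Fin q → ℝ) : 0 ≤ rnorm v := Real.sqrt_nonneg _

lemma rnorm_sq (v : Fin q → ℝ) : rnorm v ^ 2 = ∑ t, v t ^ 2 :=
  Real.sq_sqrt (by positivity)

/-- Parseval's identity; `q` orthonormal vectors in `ℝ^q` form a basis. -/
lemma sum_sq_rdot_eq_rnorm_sq (hon : ∀ i j, rdot (U i) (U j) = if i = j then 1 else 0)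
    (v : Fin q → ℝ) : ∑ i, rdot (U i) v ^ 2 = rnorm v ^ 2 := by
  set M : Matrix (Fin q) (Fin q) ℝ := Matrix.of U
  have hMMt : M * Mᵀ = 1 := by
    ext i j
    simpa [M, Matrix.mul_apply, rdot, Matrix.one_apply] using hon i j
  have hMtM : Mᵀ * M = 1 := mul_eq_one_comm.mp hMMt
  calc ∑ i, rdot (U i) v ^ 2 = (M *ᵥ v) ⬝ᵥ (M *ᵥ v) := by
        simp [M, dotProduct, mulVec, rdot, sq]
    _ = v ⬝ᵥ v := by
        rw [dotProduct_mulVec, ← mulVec_transpose, mulVec_mulVec, hMtM, one_mulVec]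
    _ = rnorm v ^ 2 := by rw [rnorm_sq]; simp [dotProduct, sq]

lemma mul_rnorm_le_of_forall_mul_abs_rdot_le
    (hon : ∀ i j, rdot (U i) (U j) = if i = j then 1 else 0)
    {k : ℝ} (hk : 0 ≤ k) {v w : Fin q → ℝ}
    (hcoef : ∀ i, k * |rdot (U i) w| ≤ |rdot (U i) v|) :
    k * rnorm w ≤ rnorm v := by
  have hsq : (k * rnorm w) ^ 2 ≤ rnorm v ^ 2 := by
    rw [mul_pow, ← sum_sq_rdot_eq_rnorm_sq hon, ← sum_sq_rdot_eq_rnorm_sq hon, Finset.mul_sum]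
    gcongr with i
    simpa [mul_pow, sq_abs] using pow_le_pow_left₀ (mul_nonneg hk (abs_nonneg _)) (hcoef i) 2
  exact (pow_le_pow_iff_left₀ (mul_nonneg hk (rnorm_nonneg w)) (rnorm_nonneg v) two_ne_zero).mp hsq

lemma rdot_sub_proj (hon : ∀ i j, rdot (U i) (U j) = if i = j then 1 else 0)
    (j : Fin q) (u : Fin q → ℝ) (i : Fin q) :
    rdot (U i) (fun t => u t - rdot (U j) u * U j t) = if i = j then 0 else rdot (U i) u := by
  have hproj : (fun t => u t - rdot (U j) u * U j t) = u - rdot (U j) u • U j := rfl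
  rw [hproj]
  change U i ⬝ᵥ (u - rdot (U j) u • U j) = _
  rw [dotProduct_sub, dotProduct_smul]
  change rdot (U i) u - rdot (U j) u • rdot (U i) (U j) = _
  rw [hon]
  split_ifs with hij
  · subst hij; simp
  · simp

end Orthonormal

lemma sub_mul_rdot_eq_rdot_mulVec {q : ℕ} {L E : Matrix (Fin q) (Fin q) ℝ} (hLsym : Lᵀ = L)
    {x u : Fin q → ℝ} {σ μ : ℝ} (hx : L *ᵥ x = σ • x) (hu : (L + E) *ᵥ u = μ • u) :
    (μ - σ) * rdot x u = rdot x (E *ᵥ u) := by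
  change (μ - σ) * (x ⬝ᵥ u) = x ⬝ᵥ (E *ᵥ u)
  calc (μ - σ) * (x ⬝ᵥ u) = x ⬝ᵥ (μ • u) - (σ • x) ⬝ᵥ u := by
        rw [dotProduct_smul, smul_dotProduct, smul_eq_mul, smul_eq_mul]; ring
    _ = x ⬝ᵥ ((L + E) *ᵥ u) - (L *ᵥ x) ⬝ᵥ u := by rw [hu, hx]
    _ = x ⬝ᵥ (E *ᵥ u) := by
        rw [add_mulVec, dotProduct_add, dotProduct_mulVec x L, ← mulVec_transpose, hLsym]
        ring

lemma half_le_abs_add_sub {a b h δ c : ℝ} (hab : c ≤ |a - b|) (hh : |h| ≤ δ) (hsep : 2 * δ < c) :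
    c / 2 ≤ |a + h - b| := by
  have htri : |a - b| ≤ |a + h - b| + |-h| := by
    simpa only [add_neg_cancel_right, add_sub_right_comm] using abs_add_le (a + h - b) (-h)
  rw [abs_neg] at htri
  linarith

theorem stmt8_general {q : ℕ} (L E : Matrix (Fin q) (Fin q) ℝ)
    (hLsym : Lᵀ = L)
    (σ : Fin q → ℝ) (U : Fin q → (Fin q → ℝ))
    (heig : ∀ i, L.mulVec (U i) = σ i • U i)
    (hon : ∀ i j, rdot (U i) (U j) = if i = j then (1 : ℝ) else 0)
    (δ c₁ : ℝ) (hδ : 0 ≤ δ)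
    (hE : ∀ v : Fin q → ℝ, rnorm (E.mulVec v) ≤ δ * rnorm v)
    (hgap : ∀ i j, i ≠ j → c₁ ≤ |σ i - σ j|) (hsep : 2 * δ < c₁)
    (i₁ : Fin q) (u : Fin q → ℝ) (h : ℝ) (hu : rnorm u = 1)
    (hueig : (L + E).mulVec u = (σ i₁ + h) • u) (hh : |h| ≤ δ) :
    rnorm (fun t => u t - rdot (U i₁) u * U i₁ t) ≤ 4 * δ / c₁ := by
  have hc₁ : 0 < c₁ := by linarith
  have hEu : rnorm (E *ᵥ u) ≤ δ := by simpa [hu] using hE u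
  have hcoef : ∀ i, c₁ / 2 * |rdot (U i) (fun t => u t - rdot (U i₁) u * U i₁ t)|
      ≤ |rdot (U i) (E *ᵥ u)| := by
    intro i
    rw [rdot_sub_proj hon, ← sub_mul_rdot_eq_rdot_mulVec hLsym (heig i) hueig, abs_mul]
    split_ifs with hi
    · rw [abs_zero, mul_zero]
      positivity
    · gcongr
      exact half_le_abs_add_sub (hgap i₁ i (Ne.symm hi)) hh hsep
  have hproj := mul_rnorm_le_of_forall_mul_abs_rdot_le hon (by positivity) hcoef
  rw [le_div_iff₀ hc₁]
  linarith

/-- Eigenvector perturbation bound: if `L` is symmetric with pairwise-distinct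
eigenvalues `σ i` (gap at least `c₁`) and orthonormal eigenvectors `U i`, `E` is a
symmetric perturbation of operator norm at most `δ` with `2δ < c₁`, and `u` is a
unit eigenvector of `L + E` with eigenvalue `σ i₁ + h`, `|h| ≤ δ`, then the
component of `u` orthogonal to `U i₁` has norm at most `4δ/c₁`. -/
theorem stmt8 {q : ℕ} (L E : Matrix (Fin q) (Fin q) ℝ)
    (hLsym : Lᵀ = L) (hEsym : Eᵀ = E)
    (σ : Fin q → ℝ) (U : Fin q → (Fin q → ℝ))
    (heig : ∀ i, L.mulVec (U i) = σ i • U i)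
    (hon : ∀ i j, rdot (U i) (U j) = if i = j then (1 : ℝ) else 0)
    (δ c₁ : ℝ) (hδ : 0 ≤ δ)
    (hE : ∀ v : Fin q → ℝ, rnorm (E.mulVec v) ≤ δ * rnorm v)
    (hgap : ∀ i j, i ≠ j → c₁ ≤ |σ i - σ j|) (hsep : 2 * δ < c₁)
    (i₁ : Fin q) (u : Fin q → ℝ) (h : ℝ) (hu : rnorm u = 1)
    (hueig : (L + E).mulVec u = (σ i₁ + h) • u) (hh : |h| ≤ δ) :
    rnorm (fun t => u t - rdot (U i₁) u * U i₁ t) ≤ 4 * δ / c₁ :=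
  stmt8_general L E hLsym σ U heig hon δ c₁ hδ hE hgap hsep i₁ u h hu hueig hh
end
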